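/- If A is a Pickands dependence function, then for every m ≥ 1 the Bernstein approximation B_m(A, ·) is also a Pickands dependence function, and moreover A(t) ≤ B_m(A, t) for all t ∈ [0,1]. -/

import Mathlib

/-- Bernstein basis polynomial `b_{k,m}(x) = C(m,k) x^k (1-x)^{m-k}`. -/
noncomputable def bern (m k : ℕ) (x : ℝ) : ℝ := (m.choose k : ℝ) * x ^ k * (1 - x) ^ (m - k)

/-- The `m`-th Bernstein approximation of `f`. -/
noncomputable def bernApprox (f : ℝ → ℝ) (m : ℕ) (t : ℝ) : ℝ :=
  ∑ k ∈ Finset.range (m + 1), f ((k : ℝ) / (m : ℝ)) * bern m k t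

/-- `A` is a Pickands dependence function. -/
def IsPickands (A : ℝ → ℝ) : Prop :=
  ConvexOn ℝ (Set.Icc (0:ℝ) 1) A ∧
    ∀ t ∈ Set.Icc (0:ℝ) 1, max t (1 - t) ≤ A t ∧ A t ≤ 1

/-!
For `t ∈ [0, 1]` the weights `bern m k t` are the binomial probabilities, and the nodes `k / m`
have mean `t` under them; so `bernApprox f m t` is an average of values of `f` with barycentre `t`.
Jensen's inequality gives `A ≤ bernApprox A m`, hence the lower bound `max t (1 - t)`, and the upper
bound `1` survives averaging. Convexity: the second derivative of `∑ k, c k * bern n k` is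
`n (n - 1) ∑ k, Δ²c k * bern (n - 2) k`, and the second differences of `k ↦ A (k / m)` are
nonnegative because `A` is convex.
-/

open Polynomial fwdDiff Finset

noncomputable def bernsteinSum (R : Type*) [CommRing R] (c : ℕ → R) (n : ℕ) : R[X] :=
  ∑ k ∈ range (n + 1), c k • bernsteinPolynomial R n k

section CommRing

variable {R : Type*} [CommRing R]

theorem derivative_bernsteinSum (c : ℕ → R) (n : ℕ) :
    derivative (bernsteinSum R c n) = n • bernsteinSum R (Δ_[1] c) (n - 1) := by
  cases n with
  | zero => simp [bernsteinSum, bernsteinPolynomial]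
  | succ n =>
    have shift : ∑ k ∈ range (n + 1), c (k + 1) • bernsteinPolynomial R n (k + 1)
        + c 0 • bernsteinPolynomial R n 0 =
        ∑ k ∈ range (n + 1), c k • bernsteinPolynomial R n k := by
      rw [← sum_range_succ' (fun k => c k • bernsteinPolynomial R n k), sum_range_succ,
        bernsteinPolynomial.eq_zero_of_lt R n.lt_succ_self, smul_zero, add_zero]
    rw [bernsteinSum, bernsteinSum, sum_range_succ', map_add, map_sum]
    simp only [derivative_smul, bernsteinPolynomial.derivative_succ,
      bernsteinPolynomial.derivative_zero, fwdDiff, add_tsub_cancel_right, sub_smul,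
      sum_sub_distrib, mul_sub, smul_sub, smul_sum, ← shift]
    simp only [smul_eq_C_mul, nsmul_eq_mul, mul_left_comm (C _), ← mul_sum]
    push_cast
    ring

theorem iterate_derivative_bernsteinSum (c : ℕ → R) (n j : ℕ) :
    derivative^[j] (bernsteinSum R c n) =
      n.descFactorial j • bernsteinSum R (Δ_[1] ^[j] c) (n - j) := by
  induction j with
  | zero => simp
  | succ j ih =>
    rw [Function.iterate_succ_apply', ih, map_nsmul, derivative_bernsteinSum, smul_smul,
      Nat.descFactorial_succ, mul_comm, Function.iterate_succ_apply', Nat.sub_sub]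

end CommRing

theorem eval_bernsteinPolynomial_nonneg {R : Type*} [CommRing R] [LinearOrder R]
    [IsStrictOrderedRing R] (n k : ℕ) {x : R} (hx : x ∈ Set.Icc 0 1) :
    0 ≤ (bernsteinPolynomial R n k).eval x := by
  obtain ⟨hx₀, hx₁⟩ := hx
  have : 0 ≤ 1 - x := sub_nonneg.mpr hx₁
  simp only [bernsteinPolynomial, eval_mul, eval_pow, eval_natCast, eval_sub, eval_one, eval_X]
  positivity

theorem Polynomial.convexOn_eval_of_iterate_derivative_two_nonneg {D : Set ℝ} (hD : Convex ℝ D)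
    {p : ℝ[X]} (hp : ∀ x ∈ D, 0 ≤ (derivative^[2] p).eval x) :
    ConvexOn ℝ D fun x => p.eval x := by
  have hderiv (q : ℝ[X]) : deriv (fun x => q.eval x) = fun x => q.derivative.eval x := by
    ext
    exact q.deriv
  refine convexOn_of_deriv2_nonneg' hD p.differentiable.differentiableOn ?_ fun x hx => ?_
  · rw [hderiv]
    exact p.derivative.differentiable.differentiableOn
  · simpa only [Function.iterate_succ, Function.iterate_zero, Function.comp_apply, hderiv,
      id] using hp x hx

theorem convexOn_eval_bernsteinSum {c : ℕ → ℝ} {n : ℕ}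
    (hc : ∀ k, k + 2 ≤ n → 0 ≤ Δ_[1] ^[2] c k) :
    ConvexOn ℝ (Set.Icc 0 1) fun x => (bernsteinSum ℝ c n).eval x := by
  refine convexOn_eval_of_iterate_derivative_two_nonneg (convex_Icc 0 1) fun x hx => ?_
  rw [iterate_derivative_bernsteinSum, eval_smul, nsmul_eq_mul]
  rcases lt_or_ge n 2 with hn | hn
  · rw [Nat.descFactorial_of_lt hn, Nat.cast_zero, zero_mul]
  refine mul_nonneg (Nat.cast_nonneg _) ?_
  rw [bernsteinSum, eval_finsetSum]
  refine sum_nonneg fun k hk => ?_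
  rw [eval_smul, smul_eq_mul]
  exact mul_nonneg (hc k (by simp at hk; omega)) (eval_bernsteinPolynomial_nonneg _ _ hx)

theorem ConvexOn.fwdDiff_iterate_two_div_nonneg {s : Set ℝ} {f : ℝ → ℝ} (hf : ConvexOn ℝ s f)
    {δ : ℝ} {k : ℕ} (hk : (k : ℝ) / δ ∈ s) (hk₂ : ((k + 2 : ℕ) : ℝ) / δ ∈ s) :
    0 ≤ Δ_[1] ^[2] (fun j : ℕ => f (j / δ)) k := by
  have hmid := hf.2 hk hk₂ (by norm_num : (0 : ℝ) ≤ 1 / 2) (by norm_num : (0 : ℝ) ≤ 1 / 2)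
    (by norm_num)
  have hk₁ : (1 / 2 : ℝ) • ((k : ℝ) / δ) + (1 / 2 : ℝ) • (((k + 2 : ℕ) : ℝ) / δ)
      = ((k + 1 : ℕ) : ℝ) / δ := by
    push_cast
    simp only [smul_eq_mul]
    ring
  rw [hk₁, smul_eq_mul, smul_eq_mul] at hmid
  simp only [Function.iterate_succ, Function.iterate_zero, Function.comp_apply, id, fwdDiff]
  push_cast [add_assoc, one_add_one_eq_two] at hmid ⊢
  linarith

theorem bern_eq_eval (m k : ℕ) (x : ℝ) : bern m k x = (bernsteinPolynomial ℝ m k).eval x := by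
  simp [bern, bernsteinPolynomial]

theorem bern_nonneg (m k : ℕ) {x : ℝ} (hx : x ∈ Set.Icc 0 1) : 0 ≤ bern m k x :=
  bern_eq_eval m k x ▸ eval_bernsteinPolynomial_nonneg m k hx

theorem sum_bern (m : ℕ) (x : ℝ) : ∑ k ∈ range (m + 1), bern m k x = 1 := by
  simp only [bern_eq_eval, ← eval_finsetSum, bernsteinPolynomial.sum, eval_one]

theorem sum_div_mul_bern {m : ℕ} (hm : m ≠ 0) (x : ℝ) :
    ∑ k ∈ range (m + 1), (k : ℝ) / m * bern m k x = x := by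
  have h := congrArg (eval x) (bernsteinPolynomial.sum_smul ℝ m)
  simp only [eval_finsetSum, nsmul_eq_mul, eval_natCast_mul, eval_X] at h
  simp only [div_mul_eq_mul_div, ← sum_div, bern_eq_eval, h]
  field_simp

theorem natCast_div_mem_Icc {k m : ℕ} (h : k ≤ m) : (k : ℝ) / m ∈ Set.Icc (0 : ℝ) 1 :=
  ⟨by positivity, div_le_one_of_le₀ (by exact_mod_cast h) (by positivity)⟩

theorem bernApprox_eq_eval (f : ℝ → ℝ) (m : ℕ) :
    bernApprox f m = fun t => (bernsteinSum ℝ (fun k => f (k / m)) m).eval t := by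
  ext t
  simp [bernApprox, bernsteinSum, eval_finsetSum, bern_eq_eval]

theorem convexOn_bernApprox {f : ℝ → ℝ} (hf : ConvexOn ℝ (Set.Icc 0 1) f) (m : ℕ) :
    ConvexOn ℝ (Set.Icc 0 1) (bernApprox f m) := by
  rw [bernApprox_eq_eval]
  exact convexOn_eval_bernsteinSum fun k hk =>
    hf.fwdDiff_iterate_two_div_nonneg (natCast_div_mem_Icc (by omega)) (natCast_div_mem_Icc hk)

theorem le_bernApprox_of_convexOn {f : ℝ → ℝ} (hf : ConvexOn ℝ (Set.Icc 0 1) f) {m : ℕ}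
    (hm : m ≠ 0) {t : ℝ} (ht : t ∈ Set.Icc 0 1) : f t ≤ bernApprox f m t := by
  have h := hf.map_sum_le (t := range (m + 1)) (p := fun k => (k : ℝ) / m)
    (fun k _ => bern_nonneg m k ht) (sum_bern m t)
    fun k hk => natCast_div_mem_Icc (mem_range_succ_iff.mp hk)
  simpa only [bernApprox, smul_eq_mul, mul_comm (bern m _ t), sum_div_mul_bern hm] using h

theorem bernApprox_le_of_le {f : ℝ → ℝ} {M : ℝ} (hf : ∀ x ∈ Set.Icc (0 : ℝ) 1, f x ≤ M) (m : ℕ)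
    {t : ℝ} (ht : t ∈ Set.Icc 0 1) : bernApprox f m t ≤ M :=
  calc bernApprox f m t ≤ ∑ k ∈ range (m + 1), M * bern m k t :=
        sum_le_sum fun k hk => mul_le_mul_of_nonneg_right
          (hf _ (natCast_div_mem_Icc (mem_range_succ_iff.mp hk))) (bern_nonneg m k ht)
    _ = M := by rw [← mul_sum, sum_bern, mul_one]

theorem bernstein_approx_pickands (A : ℝ → ℝ) (hA : IsPickands A) (m : ℕ) (hm : 1 ≤ m) :
    IsPickands (bernApprox A m) ∧ ∀ t ∈ Set.Icc (0:ℝ) 1, A t ≤ bernApprox A m t := by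
  obtain ⟨hconv, hbound⟩ := hA
  have hle : ∀ t ∈ Set.Icc (0:ℝ) 1, A t ≤ bernApprox A m t := fun t ht =>
    le_bernApprox_of_convexOn hconv (Nat.one_le_iff_ne_zero.mp hm) ht
  refine ⟨⟨convexOn_bernApprox hconv m, fun t ht => ⟨?_, ?_⟩⟩, hle⟩
  · exact (hbound t ht).1.trans (hle t ht)
  · exact bernApprox_le_of_le (fun x hx => (hbound x hx).2) m ht
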